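/- arXiv:2509.16134 — 7 statements merged into one kernel-verified Lean document; each statement's English description precedes it below -/
import Mathlib

section
/- Let T be a positive integer, let C ⊆ Fin T be a set of time steps, let m > 0 be a real number, and let e_lo, e_hi be real numbers with 0 ≤ e_lo ≤ e_hi ≤ m·|C|. Define the individual flexibility set F := {u : Fin T → ℝ | u t = 0 for all t ∉ C, 0 ≤ u t ≤ m for all t ∈ C, and e_lo ≤ ∑_t u t ≤ e_hi}. Define set functions p, b : Finset (Fin T) → ℝ by p(A) = max(0, e_lo − m·(|C| − |A ∩ C|)) and b(A) = min(e_hi, m·|A ∩ C|). Then F = {u : Fin T → ℝ | for every A ⊆ Fin T, p(A) ≤ ∑_{t ∈ A} u t ≤ b(A)}. -/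
/-!
If `u` is supported on `C` with `0 ≤ u ≤ m` there, then `u(A) ≤ m·|A ∩ C|`, and applying this to
`Aᶜ` together with `u(A) = u(Fin T) - u(Aᶜ) ≥ e_lo - u(Aᶜ)` gives the lower bound `p(A)`. Conversely,
the constraints of `Q(p, b)` at the singletons `{t}` give the support and rate constraints, and
the constraint at `A = Fin T` gives the energy bounds.
-/

open Finset

section SupportedSums

variable {ι : Type*} [DecidableEq ι] {C : Finset ι} {m : ℝ} {u : ι → ℝ}

lemma sum_eq_sum_inter_of_eq_zero (hu : ∀ t ∉ C, u t = 0) (A : Finset ι) :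
    ∑ t ∈ A, u t = ∑ t ∈ A ∩ C, u t :=
  (sum_subset inter_subset_left fun t hA hAC => hu t fun hC => hAC (mem_inter.2 ⟨hA, hC⟩)).symm

lemma sum_le_mul_card_inter (hu : ∀ t ∉ C, u t = 0) (hm : ∀ t ∈ C, u t ≤ m) (A : Finset ι) :
    ∑ t ∈ A, u t ≤ m * #(A ∩ C) :=
  calc ∑ t ∈ A, u t = ∑ t ∈ A ∩ C, u t := sum_eq_sum_inter_of_eq_zero hu A
    _ ≤ ∑ _t ∈ A ∩ C, m := sum_le_sum fun t ht => hm t (mem_inter.1 ht).2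
    _ = m * #(A ∩ C) := by rw [sum_const, nsmul_eq_mul, mul_comm]

end SupportedSums

section Flexibility

variable {ι : Type*} [Fintype ι]

def flexibilitySet (C : Finset ι) (m e_lo e_hi : ℝ) : Set (ι → ℝ) :=
  {u | (∀ t ∉ C, u t = 0) ∧ (∀ t ∈ C, 0 ≤ u t ∧ u t ≤ m) ∧
    e_lo ≤ ∑ t, u t ∧ ∑ t, u t ≤ e_hi}

def gPolymatroid (p b : Finset ι → ℝ) : Set (ι → ℝ) :=
  {u | ∀ A, p A ≤ ∑ t ∈ A, u t ∧ ∑ t ∈ A, u t ≤ b A}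

variable [DecidableEq ι]

def flexibilityLower (C : Finset ι) (m e_lo : ℝ) (A : Finset ι) : ℝ :=
  max 0 (e_lo - m * ((#C : ℝ) - (#(A ∩ C) : ℝ)))

def flexibilityUpper (C : Finset ι) (m e_hi : ℝ) (A : Finset ι) : ℝ :=
  min e_hi (m * (#(A ∩ C) : ℝ))

variable {C : Finset ι} {m e_lo e_hi : ℝ}

lemma cast_card_compl_inter (A : Finset ι) :
    (#(Aᶜ ∩ C) : ℝ) = #C - #(A ∩ C) := by
  rw [eq_sub_iff_add_eq, inter_comm, ← sdiff_eq_inter_compl, inter_comm]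
  exact_mod_cast card_sdiff_add_card_inter C A

lemma flexibilitySet_subset_gPolymatroid :
    flexibilitySet C m e_lo e_hi ⊆
      gPolymatroid (flexibilityLower C m e_lo) (flexibilityUpper C m e_hi) := by
  rintro u ⟨hsupp, hrate, hlo, hhi⟩ A
  have hnonneg : ∀ t, 0 ≤ u t := fun t => by
    by_cases ht : t ∈ C
    · exact (hrate t ht).1
    · exact (hsupp t ht).ge
  have hbound := sum_le_mul_card_inter hsupp fun t ht => (hrate t ht).2
  have hcompl : ∑ t ∈ A, u t + ∑ t ∈ Aᶜ, u t = ∑ t, u t := sum_add_sum_compl A u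
  have hcompl_le := hbound Aᶜ
  rw [cast_card_compl_inter] at hcompl_le
  refine ⟨max_le (sum_nonneg fun t _ => hnonneg t) (by linarith), le_min ?_ (hbound A)⟩
  exact (sum_le_sum_of_subset_of_nonneg (subset_univ A) fun t _ _ => hnonneg t).trans hhi

lemma gPolymatroid_subset_flexibilitySet :
    gPolymatroid (flexibilityLower C m e_lo) (flexibilityUpper C m e_hi) ⊆
      flexibilitySet C m e_lo e_hi := by
  intro u hu
  have hsingle : ∀ t, 0 ≤ u t ∧ u t ≤ m * (#({t} ∩ C) : ℝ) := fun t => by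
    have := hu {t}
    simp only [flexibilityLower, flexibilityUpper, sum_singleton] at this
    exact ⟨(le_max_left _ _).trans this.1, this.2.trans (min_le_right _ _)⟩
  have huniv := hu univ
  simp only [flexibilityLower, flexibilityUpper, univ_inter, sub_self, mul_zero, sub_zero]
    at huniv
  refine ⟨fun t ht => ?_, fun t ht => ?_, (le_max_right _ _).trans huniv.1,
    huniv.2.trans (min_le_left _ _)⟩
  · have h := hsingle t
    rw [singleton_inter_of_notMem ht, card_empty, Nat.cast_zero, mul_zero] at h
    exact le_antisymm h.2 h.1
  · simpa [singleton_inter_of_mem ht] using hsingle t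

theorem flexibilitySet_eq_gPolymatroid :
    flexibilitySet C m e_lo e_hi =
      gPolymatroid (flexibilityLower C m e_lo) (flexibilityUpper C m e_hi) :=
  flexibilitySet_subset_gPolymatroid.antisymm gPolymatroid_subset_flexibilitySet

end Flexibility

theorem individual_flexibility_eq_gPolymatroid_general
    (T : ℕ) (C : Finset (Fin T)) (m : ℝ)
    (e_lo e_hi : ℝ) :
    {u : Fin T → ℝ |
        (∀ t ∉ C, u t = 0) ∧ (∀ t ∈ C, 0 ≤ u t ∧ u t ≤ m) ∧
        e_lo ≤ ∑ t, u t ∧ ∑ t, u t ≤ e_hi} =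
    {u : Fin T → ℝ | ∀ A : Finset (Fin T),
        max 0 (e_lo - m * ((C.card : ℝ) - ((A ∩ C).card : ℝ))) ≤ ∑ t ∈ A, u t ∧
        ∑ t ∈ A, u t ≤ min e_hi (m * ((A ∩ C).card : ℝ))} :=
  flexibilitySet_eq_gPolymatroid

/-- The individual flexibility set of an EV equals the generalized
polymatroid `Q(p, b)` generated by `p(A) = max (0, e_lo − m·(|C| − |A ∩ C|))` and
`b(A) = min (e_hi, m·|A ∩ C|)`. -/
theorem individual_flexibility_eq_gPolymatroid
    (T : ℕ) (hT : 0 < T) (C : Finset (Fin T)) (m : ℝ) (hm : 0 < m)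
    (e_lo e_hi : ℝ) (he0 : 0 ≤ e_lo) (hee : e_lo ≤ e_hi)
    (he2 : e_hi ≤ m * (C.card : ℝ)) :
    {u : Fin T → ℝ |
        (∀ t ∉ C, u t = 0) ∧ (∀ t ∈ C, 0 ≤ u t ∧ u t ≤ m) ∧
        e_lo ≤ ∑ t, u t ∧ ∑ t, u t ≤ e_hi} =
    {u : Fin T → ℝ | ∀ A : Finset (Fin T),
        max 0 (e_lo - m * ((C.card : ℝ) - ((A ∩ C).card : ℝ))) ≤ ∑ t ∈ A, u t ∧
        ∑ t ∈ A, u t ≤ min e_hi (m * ((A ∩ C).card : ℝ))} :=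
  individual_flexibility_eq_gPolymatroid_general T C m e_lo e_hi
end

section
/- Let T be a positive integer, C ⊆ Fin T, m > 0 a real number, and e_lo, e_hi real numbers with 0 ≤ e_lo ≤ e_hi ≤ m·|C|. Define p(A) = max(0, e_lo − m·(|C| − |A ∩ C|)) and b(A) = min(e_hi, m·|A ∩ C|) for A ⊆ Fin T. Then the pair (p, b) satisfies the cross-inequality: for all X, Y ⊆ Fin T, b(X) − p(Y) ≥ b(X \ Y) − p(Y \ X). -/
/-!
Write `s = X ∩ C`, `t = Y ∩ C` and `g_c(x) = max 0 x - max 0 (x - c)`, the clamp of `x` to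
`[0, c]`. Since `min E y = E - max 0 (E - y)`, both increments `b X - b (X \ Y)` and
`p Y - p (Y \ X)` are values of `g_c` with `c = m |s ∩ t|`: the first at `e_hi - m |s \ t|`,
the second at `e_lo - m (|C| - |t|)`. As `g_c` is monotone, it suffices that `e_lo ≤ e_hi` and
`|s \ t| + |t| = |s ∪ t| ≤ |C|`.
-/

open Finset

theorem monotone_max_zero_sub_max_zero_sub {c : ℝ} (hc : 0 ≤ c) :
    Monotone fun x : ℝ => max 0 x - max 0 (x - c) := by
  intro x y hxy
  simp only [max_def]
  split_ifs <;> linarith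

theorem min_eq_sub_max_zero_sub (E y : ℝ) : min E y = E - max 0 (E - y) := by
  rw [← min_sub_sub_left, sub_zero, sub_sub_cancel]

theorem max_zero_sub_sub_max_zero_sub_le_min_add_sub_min {L E a c r : ℝ} (hLE : L ≤ E)
    (hc : 0 ≤ c) (har : a ≤ r) :
    max 0 (L - r) - max 0 (L - (r + c)) ≤ min E (a + c) - min E a := by
  have hmono := monotone_max_zero_sub_max_zero_sub hc (show L - r ≤ E - a by linarith)
  simp only at hmono
  rw [min_eq_sub_max_zero_sub E (a + c), min_eq_sub_max_zero_sub E a, ← sub_sub, ← sub_sub]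
  linarith

theorem pair_cross_inequality_general
    (T : ℕ) (C : Finset (Fin T)) (m : ℝ) (hm : 0 < m)
    (e_lo e_hi : ℝ) (hee : e_lo ≤ e_hi)
    (p b : Finset (Fin T) → ℝ)
    (hp : ∀ A, p A = max 0 (e_lo - m * ((C.card : ℝ) - ((A ∩ C).card : ℝ))))
    (hb : ∀ A, b A = min e_hi (m * ((A ∩ C).card : ℝ))) :
    ∀ X Y : Finset (Fin T), b X - p Y ≥ b (X \ Y) - p (Y \ X) := by
  intro X Y
  have hXY : X \ Y ∩ C = (X ∩ C) \ (Y ∩ C) := inf_sdiff_distrib_right X Y C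
  have hYX : Y \ X ∩ C = (Y ∩ C) \ (X ∩ C) := inf_sdiff_distrib_right Y X C
  rw [hb, hb, hp, hp, hXY, hYX]
  set s := X ∩ C
  set t := Y ∩ C
  have hs : (#(s \ t) + #(s ∩ t) : ℝ) = #s := mod_cast card_sdiff_add_card_inter s t
  have ht : (#(t \ s) + #(s ∩ t) : ℝ) = #t :=
    mod_cast inter_comm s t ▸ card_sdiff_add_card_inter t s
  have hcover : #(s \ t) + #t ≤ #C := by
    rw [card_sdiff_add_card]
    exact card_le_card (union_subset inter_subset_right inter_subset_right)
  have hclamp := max_zero_sub_sub_max_zero_sub_le_min_add_sub_min (E := e_hi) (a := m * #(s \ t))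
    (c := m * #(s ∩ t)) (r := m * (#C - #t)) hee (by positivity)
    (mul_le_mul_of_nonneg_left (by rw [le_sub_iff_add_le]; exact_mod_cast hcover) hm.le)
  have hshift : m * (#C - #t) + m * #(s ∩ t) = m * (#C - #(t \ s)) := by rw [← ht]; ring
  rw [hshift, ← mul_add, hs] at hclamp
  linarith

/-- The pair `(p, b)` generating the individual flexibility set satisfies
the cross-inequality `b(X) − p(Y) ≥ b(X \ Y) − p(Y \ X)`. -/
theorem pair_cross_inequality
    (T : ℕ) (hT : 0 < T) (C : Finset (Fin T)) (m : ℝ) (hm : 0 < m)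
    (e_lo e_hi : ℝ) (he0 : 0 ≤ e_lo) (hee : e_lo ≤ e_hi)
    (he2 : e_hi ≤ m * (C.card : ℝ))
    (p b : Finset (Fin T) → ℝ)
    (hp : ∀ A, p A = max 0 (e_lo - m * ((C.card : ℝ) - ((A ∩ C).card : ℝ))))
    (hb : ∀ A, b A = min e_hi (m * ((A ∩ C).card : ℝ))) :
    ∀ X Y : Finset (Fin T), b X - p Y ≥ b (X \ Y) - p (Y \ X) :=
  pair_cross_inequality_general T C m hm e_lo e_hi hee p b hp hb
end

section
/- Let T be a positive integer, let I be a nonempty finite index set, and for each i ∈ I let p_i, b_i : Finset (Fin T) → ℝ be set functions with p_i(∅) = b_i(∅) = 0 such that p_i is supermodular, b_i is submodular, and b_i(X) − p_i(Y) ≥ b_i(X \ Y) − p_i(Y \ X) for all X, Y ⊆ Fin T. Then the Minkowski sum of the generalized polymatroids Q(p_i, b_i) equals the generalized polymatroid generated by the sums: ∑_{i ∈ I} Q(p_i, b_i) = Q(∑_{i ∈ I} p_i, ∑_{i ∈ I} b_i). -/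
/-!
The two-summand case carries the content; more summands follow by induction, since sums of
paramodular pairs are paramodular. For two pairs, split `u ∈ Q(p₁ + p₂, b₁ + b₂)` one coordinate
`t` at a time. The share `c` of `u t` given to the first summand must satisfy one lower and one
upper bound for each `A ⊆ S \ {t}`, and supermodularity, submodularity and the cross inequality
of both pairs say exactly that every lower bound is below every upper bound. With such a `c`,
contracting both pairs at `t` keeps them paramodular on `S \ {t}` and keeps the rest of `u` in
the sum of the contracted polyhedra, so induction on the ground set finishes.
-/

open Finset
open scoped Pointwise

section GPolymatroid

variable {α : Type*}

def gPolymatroidOn (S : Finset α) (p b : Finset α → ℝ) : Set (α → ℝ) :=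
  {u | ∀ A ⊆ S, p A ≤ ∑ x ∈ A, u x ∧ ∑ x ∈ A, u x ≤ b A}

theorem mem_gPolymatroidOn {S : Finset α} {p b : Finset α → ℝ} {u : α → ℝ} :
    u ∈ gPolymatroidOn S p b ↔ ∀ A ⊆ S, p A ≤ ∑ x ∈ A, u x ∧ ∑ x ∈ A, u x ≤ b A :=
  Iff.rfl

theorem add_gPolymatroidOn_subset (S : Finset α) (p₁ b₁ p₂ b₂ : Finset α → ℝ) :
    gPolymatroidOn S p₁ b₁ + gPolymatroidOn S p₂ b₂ ⊆ gPolymatroidOn S (p₁ + p₂) (b₁ + b₂) := by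
  rintro _ ⟨v, hv, w, hw, rfl⟩ A hA
  simp only [Pi.add_apply, sum_add_distrib]
  exact ⟨add_le_add (hv A hA).1 (hw A hA).1, add_le_add (hv A hA).2 (hw A hA).2⟩

theorem Finset.exists_forall_le_and_le {ι β : Type*} [SemilatticeSup β] {s : Finset ι}
    (hs : s.Nonempty) {l h : ι → β} (hlh : ∀ i ∈ s, ∀ j ∈ s, l i ≤ h j) :
    ∃ c, ∀ i ∈ s, l i ≤ c ∧ c ≤ h i :=
  ⟨s.sup' hs l, fun i hi => ⟨le_sup' l hi, sup'_le hs l fun j hj => hlh j hj i hi⟩⟩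

section OrderedGroup

variable {β : Type*} [AddCommGroup β] [LinearOrder β] [IsOrderedAddMonoid β]

theorem max_add_max_le {a b c d e : β} (h₁ : a + c ≤ e) (h₂ : a + d ≤ e) (h₃ : b + c ≤ e)
    (h₄ : b + d ≤ e) : max a b + max c d ≤ e := by
  rw [← max_add_add_right, ← max_add_add_left, ← max_add_add_left]
  exact max_le (max_le h₁ h₂) (max_le h₃ h₄)

theorem le_min_add_min {a b c d e : β} (h₁ : e ≤ a + c) (h₂ : e ≤ a + d) (h₃ : e ≤ b + c)
    (h₄ : e ≤ b + d) : e ≤ min a b + min c d := by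
  rw [← min_add_add_right, ← min_add_add_left, ← min_add_add_left]
  exact le_min (le_min h₁ h₂) (le_min h₃ h₄)

theorem le_min_sub_max {a b c d e : β} (h₁ : e ≤ a - c) (h₂ : e ≤ a - d) (h₃ : e ≤ b - c)
    (h₄ : e ≤ b - d) : e ≤ min a b - max c d := by
  rw [le_sub_iff_add_le, ← max_add_add_left]
  rw [le_sub_iff_add_le] at h₁ h₂ h₃ h₄
  exact max_le (le_min h₁ h₃) (le_min h₂ h₄)

end OrderedGroup

variable [DecidableEq α]

def SupermodularOn (S : Finset α) (f : Finset α → ℝ) : Prop :=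
  ∀ ⦃X⦄, X ⊆ S → ∀ ⦃Y⦄, Y ⊆ S → f X + f Y ≤ f (X ∪ Y) + f (X ∩ Y)

def SubmodularOn (S : Finset α) (f : Finset α → ℝ) : Prop :=
  ∀ ⦃X⦄, X ⊆ S → ∀ ⦃Y⦄, Y ⊆ S → f (X ∪ Y) + f (X ∩ Y) ≤ f X + f Y

theorem supermodularOn_neg_iff {S : Finset α} {f : Finset α → ℝ} :
    SupermodularOn S (-f) ↔ SubmodularOn S f := by
  simp only [SupermodularOn, SubmodularOn, Pi.neg_apply, ← neg_add, neg_le_neg_iff]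

structure IsParamodularOn (S : Finset α) (p b : Finset α → ℝ) : Prop where
  lower_empty : p ∅ = 0
  upper_empty : b ∅ = 0
  supermodularOn : SupermodularOn S p
  submodularOn : SubmodularOn S b
  sdiff_le : ∀ ⦃X⦄, X ⊆ S → ∀ ⦃Y⦄, Y ⊆ S → b (X \ Y) - p (Y \ X) ≤ b X - p Y

theorem IsParamodularOn.finset_sum {ι : Type*} {S : Finset α} {s : Finset ι}
    {p b : ι → Finset α → ℝ} (h : ∀ i ∈ s, IsParamodularOn S (p i) (b i)) :
    IsParamodularOn S (∑ i ∈ s, p i) (∑ i ∈ s, b i) where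
  lower_empty := by rw [Finset.sum_apply]; exact sum_eq_zero fun i hi => (h i hi).lower_empty
  upper_empty := by rw [Finset.sum_apply]; exact sum_eq_zero fun i hi => (h i hi).upper_empty
  supermodularOn X hX Y hY := by
    simp only [Finset.sum_apply, ← sum_add_distrib]
    exact sum_le_sum fun i hi => (h i hi).supermodularOn hX hY
  submodularOn X hX Y hY := by
    simp only [Finset.sum_apply, ← sum_add_distrib]
    exact sum_le_sum fun i hi => (h i hi).submodularOn hX hY
  sdiff_le X hX Y hY := by
    simp only [Finset.sum_apply, ← sum_sub_distrib]
    exact sum_le_sum fun i hi => (h i hi).sdiff_le hX hY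

theorem forall_subset_insert_iff {S : Finset α} {t : α} {P : Finset α → Prop} :
    (∀ A ⊆ insert t S, P A) ↔ ∀ A ⊆ S, P A ∧ P (insert t A) := by
  refine ⟨fun h A hA => ⟨h A (hA.trans (subset_insert t S)), h _ (insert_subset_insert t hA)⟩,
    fun h A hA => ?_⟩
  by_cases htA : t ∈ A
  · rw [← insert_erase htA]
    exact (h _ (subset_insert_iff.1 hA)).2
  · exact (h A ((subset_insert_iff_of_notMem htA).1 hA)).1

/-- Fixing the coordinate `t` of a point of `Q(p, b)` to `c` leaves the other coordinates in
`Q(lowerContract p t c, upperContract b t c)`. -/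
def lowerContract (f : Finset α → ℝ) (t : α) (c : ℝ) (A : Finset α) : ℝ :=
  max (f A) (f (insert t A) - c)

def upperContract (f : Finset α → ℝ) (t : α) (c : ℝ) (A : Finset α) : ℝ :=
  min (f A) (f (insert t A) - c)

theorem lowerContract_neg (f : Finset α → ℝ) (t : α) (c : ℝ) :
    lowerContract (-f) t (-c) = -upperContract f t c := by
  ext A
  simp only [lowerContract, upperContract, Pi.neg_apply, ← max_neg_neg, neg_sub', sub_neg_eq_add]

theorem le_lowerContract (f : Finset α → ℝ) (t : α) (c : ℝ) (A : Finset α) :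
    f A ≤ lowerContract f t c A :=
  le_max_left _ _

theorem sub_le_lowerContract (f : Finset α → ℝ) (t : α) (c : ℝ) (A : Finset α) :
    f (insert t A) - c ≤ lowerContract f t c A :=
  le_max_right _ _

theorem upperContract_le (f : Finset α → ℝ) (t : α) (c : ℝ) (A : Finset α) :
    upperContract f t c A ≤ f A :=
  min_le_left _ _

theorem upperContract_le_sub (f : Finset α → ℝ) (t : α) (c : ℝ) (A : Finset α) :
    upperContract f t c A ≤ f (insert t A) - c :=
  min_le_right _ _

section Contraction

variable {S : Finset α} {t : α} (ht : t ∉ S)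
include ht

theorem SupermodularOn.lowerContract {f : Finset α → ℝ} (hf : SupermodularOn (insert t S) f)
    (c : ℝ) : SupermodularOn S (lowerContract f t c) := by
  intro X hX Y hY
  have htX : t ∉ X := notMem_mono hX ht
  have htY : t ∉ Y := notMem_mono hY ht
  have h₁ := hf (hX.trans (subset_insert t S)) (hY.trans (subset_insert t S))
  have h₂ := hf (hX.trans (subset_insert t S)) (insert_subset_insert t hY)
  have h₃ := hf (insert_subset_insert t hX) (hY.trans (subset_insert t S))
  have h₄ := hf (insert_subset_insert t hX) (insert_subset_insert t hY)
  rw [union_insert, inter_insert_of_notMem htX] at h₂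
  rw [insert_union, insert_inter_of_notMem htY] at h₃
  rw [insert_union, union_insert, insert_idem, ← insert_inter_distrib] at h₄
  have := le_lowerContract f t c (X ∪ Y)
  have := sub_le_lowerContract f t c (X ∪ Y)
  have := le_lowerContract f t c (X ∩ Y)
  have := sub_le_lowerContract f t c (X ∩ Y)
  apply max_add_max_le <;> linarith

theorem SubmodularOn.upperContract {f : Finset α → ℝ} (hf : SubmodularOn (insert t S) f)
    (c : ℝ) : SubmodularOn S (upperContract f t c) := by
  rw [← supermodularOn_neg_iff, ← lowerContract_neg]
  exact (supermodularOn_neg_iff.2 hf).lowerContract ht (-c)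

theorem IsParamodularOn.contract {p b : Finset α → ℝ} {c : ℝ}
    (h : IsParamodularOn (insert t S) p b) (hp : p {t} ≤ c) (hb : c ≤ b {t}) :
    IsParamodularOn S (lowerContract p t c) (upperContract b t c) where
  lower_empty := by simpa [lowerContract, h.lower_empty] using hp
  upper_empty := by simpa [upperContract, h.upper_empty] using hb
  supermodularOn := h.supermodularOn.lowerContract ht c
  submodularOn := h.submodularOn.upperContract ht c
  sdiff_le X hX Y hY := by
    have htX : t ∉ X := notMem_mono hX ht
    have htY : t ∉ Y := notMem_mono hY ht
    have h₁ := h.sdiff_le (hX.trans (subset_insert t S)) (hY.trans (subset_insert t S))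
    have h₂ := h.sdiff_le (hX.trans (subset_insert t S)) (insert_subset_insert t hY)
    have h₃ := h.sdiff_le (insert_subset_insert t hX) (hY.trans (subset_insert t S))
    have h₄ := h.sdiff_le (insert_subset_insert t hX) (insert_subset_insert t hY)
    rw [sdiff_insert_of_notMem htX, insert_sdiff_of_notMem _ htX] at h₂
    rw [insert_sdiff_of_notMem _ htY, sdiff_insert_of_notMem htY] at h₃
    rw [insert_sdiff_insert, sdiff_insert_of_notMem htX, insert_sdiff_insert,
      sdiff_insert_of_notMem htY] at h₄
    have := upperContract_le b t c (X \ Y)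
    have := upperContract_le_sub b t c (X \ Y)
    have := le_lowerContract p t c (Y \ X)
    have := sub_le_lowerContract p t c (Y \ X)
    apply le_min_sub_max <;> linarith

theorem update_mem_gPolymatroidOn_insert {p b : Finset α → ℝ} {c : ℝ} {v : α → ℝ}
    (hv : v ∈ gPolymatroidOn S (lowerContract p t c) (upperContract b t c)) :
    Function.update v t c ∈ gPolymatroidOn (insert t S) p b := by
  rw [mem_gPolymatroidOn, forall_subset_insert_iff]
  intro A hA
  have htA : t ∉ A := notMem_mono hA ht
  obtain ⟨hlo, hhi⟩ := hv A hA
  rw [sum_insert htA, Function.update_self, sum_update_of_notMem htA]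
  exact ⟨⟨(le_lowerContract p t c A).trans hlo, hhi.trans (upperContract_le b t c A)⟩,
    by linarith [sub_le_lowerContract p t c A], by linarith [upperContract_le_sub b t c A]⟩

end Contraction

section Splitting

variable {S : Finset α} {t : α} {p₁ b₁ p₂ b₂ : Finset α → ℝ} {u : α → ℝ}

/-- The lower bounds (left) and upper bounds (right) on the share `c` of `u t` that the first
summand may receive. -/
theorem splitting_lower_le_upper (ht : t ∉ S) (h₁ : IsParamodularOn (insert t S) p₁ b₁)
    (h₂ : IsParamodularOn (insert t S) p₂ b₂)
    (hu : u ∈ gPolymatroidOn (insert t S) (p₁ + p₂) (b₁ + b₂)) {A B : Finset α}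
    (hA : A ⊆ S) (hB : B ⊆ S) :
    max (p₁ (insert t A) + p₂ A - ∑ x ∈ A, u x) (u t + ∑ x ∈ A, u x - b₁ A - b₂ (insert t A)) ≤
      min (u t + ∑ x ∈ B, u x - p₁ B - p₂ (insert t B))
        (b₁ (insert t B) + b₂ B - ∑ x ∈ B, u x) := by
  have hu' : ∀ C ⊆ insert t S, p₁ C + p₂ C ≤ ∑ x ∈ C, u x ∧ ∑ x ∈ C, u x ≤ b₁ C + b₂ C := hu
  have htA : t ∉ A := notMem_mono hA ht
  have htB : t ∉ B := notMem_mono hB ht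
  have hA' : A ⊆ insert t S := hA.trans (subset_insert t S)
  have hB' : B ⊆ insert t S := hB.trans (subset_insert t S)
  have hAt : insert t A ⊆ insert t S := insert_subset_insert t hA
  have hBt : insert t B ⊆ insert t S := insert_subset_insert t hB
  have hunion := hu' (insert t (A ∪ B)) (insert_subset_insert t (union_subset hA hB))
  have hinter := hu' (A ∩ B) (inter_subset_left.trans hA')
  have hAB := hu' (A \ B) (sdiff_subset.trans hA')
  have hBA := hu' (B \ A) (sdiff_subset.trans hB')
  rw [sum_insert (notMem_union.2 ⟨htA, htB⟩)] at hunion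
  have hmod : ∑ x ∈ A ∪ B, u x + ∑ x ∈ A ∩ B, u x = ∑ x ∈ A, u x + ∑ x ∈ B, u x :=
    sum_union_inter
  have hdiff : ∑ x ∈ A \ B, u x - ∑ x ∈ B \ A, u x = ∑ x ∈ A, u x - ∑ x ∈ B, u x :=
    sum_sdiff_sub_sum_sdiff
  refine max_le (le_min ?_ ?_) (le_min ?_ ?_)
  · have s₁ := h₁.supermodularOn hAt hB'
    have s₂ := h₂.supermodularOn hA' hBt
    rw [insert_union, insert_inter_of_notMem htB] at s₁
    rw [union_insert, inter_insert_of_notMem htA] at s₂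
    linarith
  · have c₁ := h₁.sdiff_le hBt hAt
    have c₂ := h₂.sdiff_le hB' hA'
    rw [insert_sdiff_insert, sdiff_insert_of_notMem htB, insert_sdiff_insert,
      sdiff_insert_of_notMem htA] at c₁
    linarith
  · have c₁ := h₁.sdiff_le hA' hB'
    have c₂ := h₂.sdiff_le hAt hBt
    rw [insert_sdiff_insert, sdiff_insert_of_notMem htA, insert_sdiff_insert,
      sdiff_insert_of_notMem htB] at c₂
    linarith
  · have s₁ := h₁.submodularOn hA' hBt
    have s₂ := h₂.submodularOn hAt hB'
    rw [union_insert, inter_insert_of_notMem htA] at s₁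
    rw [insert_union, insert_inter_of_notMem htB] at s₂
    linarith

theorem exists_splitting_value (ht : t ∉ S) (h₁ : IsParamodularOn (insert t S) p₁ b₁)
    (h₂ : IsParamodularOn (insert t S) p₂ b₂)
    (hu : u ∈ gPolymatroidOn (insert t S) (p₁ + p₂) (b₁ + b₂)) :
    ∃ c : ℝ, (p₁ {t} ≤ c ∧ c ≤ b₁ {t}) ∧ (p₂ {t} ≤ u t - c ∧ u t - c ≤ b₂ {t}) ∧
      u ∈ gPolymatroidOn S (lowerContract p₁ t c + lowerContract p₂ t (u t - c))
        (upperContract b₁ t c + upperContract b₂ t (u t - c)) := by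
  obtain ⟨c, hc⟩ := exists_forall_le_and_le ⟨∅, empty_mem_powerset S⟩ fun A hA B hB =>
    splitting_lower_le_upper ht h₁ h₂ hu (mem_powerset.1 hA) (mem_powerset.1 hB)
  have hc' : ∀ A ⊆ S,
      (p₁ (insert t A) + p₂ A ≤ c + ∑ x ∈ A, u x ∧ c + ∑ x ∈ A, u x ≤ b₁ (insert t A) + b₂ A) ∧
      (p₁ A + p₂ (insert t A) ≤ u t - c + ∑ x ∈ A, u x ∧
        u t - c + ∑ x ∈ A, u x ≤ b₁ A + b₂ (insert t A)) := by
    intro A hA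
    obtain ⟨hl, hh⟩ := hc A (mem_powerset.2 hA)
    rw [max_le_iff] at hl
    rw [le_min_iff] at hh
    refine ⟨⟨?_, ?_⟩, ?_, ?_⟩ <;> linarith
  refine ⟨c, ?_, ?_, fun A hA => ?_⟩
  · simpa [h₂.lower_empty, h₂.upper_empty] using (hc' ∅ (empty_subset S)).1
  · simpa [h₁.lower_empty, h₁.upper_empty] using (hc' ∅ (empty_subset S)).2
  have hu' : ∀ C ⊆ insert t S, p₁ C + p₂ C ≤ ∑ x ∈ C, u x ∧ ∑ x ∈ C, u x ≤ b₁ C + b₂ C := hu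
  obtain ⟨⟨hlo, hhi⟩, hlo', hhi'⟩ := forall_subset_insert_iff.1 hu' A hA
  rw [sum_insert (notMem_mono hA ht)] at hlo' hhi'
  obtain ⟨⟨hl₁, hh₁⟩, hl₂, hh₂⟩ := hc' A hA
  exact ⟨max_add_max_le (by linarith) (by linarith) (by linarith) (by linarith),
    le_min_add_min (by linarith) (by linarith) (by linarith) (by linarith)⟩

end Splitting

theorem gPolymatroidOn_add_subset {S : Finset α} {p₁ b₁ p₂ b₂ : Finset α → ℝ}
    (h₁ : IsParamodularOn S p₁ b₁) (h₂ : IsParamodularOn S p₂ b₂) :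
    gPolymatroidOn S (p₁ + p₂) (b₁ + b₂) ⊆ gPolymatroidOn S p₁ b₁ + gPolymatroidOn S p₂ b₂ := by
  induction S using Finset.induction_on generalizing p₁ b₁ p₂ b₂ with
  | empty =>
    intro u _
    refine ⟨u, ?_, 0, ?_, add_zero u⟩ <;> intro A hA <;>
      simp [subset_empty.1 hA, h₁.lower_empty, h₁.upper_empty, h₂.lower_empty, h₂.upper_empty]
  | insert t S ht ih =>
    intro u hu
    obtain ⟨c, ⟨hp₁, hb₁⟩, ⟨hp₂, hb₂⟩, hc⟩ := exists_splitting_value ht h₁ h₂ hu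
    obtain ⟨v, hv, w, hw, hvw⟩ :=
      ih (h₁.contract ht hp₁ hb₁) (h₂.contract ht hp₂ hb₂) hc
    refine ⟨_, update_mem_gPolymatroidOn_insert ht hv, _,
      update_mem_gPolymatroidOn_insert ht hw, ?_⟩
    dsimp only at hvw ⊢
    rw [← Function.update_add, hvw, add_sub_cancel, Function.update_eq_self]

theorem gPolymatroidOn_add {S : Finset α} {p₁ b₁ p₂ b₂ : Finset α → ℝ}
    (h₁ : IsParamodularOn S p₁ b₁) (h₂ : IsParamodularOn S p₂ b₂) :
    gPolymatroidOn S p₁ b₁ + gPolymatroidOn S p₂ b₂ = gPolymatroidOn S (p₁ + p₂) (b₁ + b₂) :=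
  (add_gPolymatroidOn_subset S p₁ b₁ p₂ b₂).antisymm (gPolymatroidOn_add_subset h₁ h₂)

theorem gPolymatroidOn_finset_sum {ι : Type*} {S : Finset α} {s : Finset ι} (hs : s.Nonempty)
    {p b : ι → Finset α → ℝ} (h : ∀ i ∈ s, IsParamodularOn S (p i) (b i)) :
    ∑ i ∈ s, gPolymatroidOn S (p i) (b i) = gPolymatroidOn S (∑ i ∈ s, p i) (∑ i ∈ s, b i) := by
  induction hs using Finset.Nonempty.cons_induction with
  | singleton i => simp
  | cons i s hi hs ih =>
    rw [forall_mem_cons] at h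
    rw [sum_cons, sum_cons, sum_cons, ih h.2,
      gPolymatroidOn_add h.1 (IsParamodularOn.finset_sum h.2)]

end GPolymatroid

theorem minkowski_sum_gPolymatroids_general
    (T : ℕ) (ι : Type*) [Fintype ι] [Nonempty ι]
    (p b : ι → Finset (Fin T) → ℝ)
    (hp0 : ∀ i, p i ∅ = 0) (hb0 : ∀ i, b i ∅ = 0)
    (hsuper : ∀ i, ∀ X Y : Finset (Fin T), p i X + p i Y ≤ p i (X ∪ Y) + p i (X ∩ Y))
    (hsub : ∀ i, ∀ X Y : Finset (Fin T), b i X + b i Y ≥ b i (X ∪ Y) + b i (X ∩ Y))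
    (hcross : ∀ i, ∀ X Y : Finset (Fin T), b i X - p i Y ≥ b i (X \ Y) - p i (Y \ X)) :
    {u : Fin T → ℝ | ∃ f : ι → Fin T → ℝ,
        (∀ i, f i ∈ {v : Fin T → ℝ | ∀ A : Finset (Fin T),
          p i A ≤ ∑ t ∈ A, v t ∧ ∑ t ∈ A, v t ≤ b i A}) ∧ u = ∑ i, f i} =
    {u : Fin T → ℝ | ∀ A : Finset (Fin T),
        ∑ i, p i A ≤ ∑ t ∈ A, u t ∧ ∑ t ∈ A, u t ≤ ∑ i, b i A} := by
  have h : ∀ i ∈ univ, IsParamodularOn univ (p i) (b i) := fun i _ =>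
    { lower_empty := hp0 i
      upper_empty := hb0 i
      supermodularOn := fun X _ Y _ => hsuper i X Y
      submodularOn := fun X _ Y _ => hsub i X Y
      sdiff_le := fun X _ Y _ => hcross i X Y }
  ext u
  have hu := Set.ext_iff.1 (gPolymatroidOn_finset_sum univ_nonempty h) u
  simp only [Set.mem_finsetSum, mem_gPolymatroidOn, Finset.sum_apply, subset_univ, forall_const,
    mem_univ] at hu
  exact Iff.trans ⟨fun ⟨f, hf, huf⟩ => ⟨f, fun {i} => hf i, huf.symm⟩,
    fun ⟨g, hg, hgu⟩ => ⟨g, fun i => hg, hgu.symm⟩⟩ hu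

/-- The Minkowski sum of generalized polymatroids `Q(p_i, b_i)` equals the
generalized polymatroid `Q(∑ p_i, ∑ b_i)`. -/
theorem minkowski_sum_gPolymatroids
    (T : ℕ) (hT : 0 < T) (ι : Type*) [Fintype ι] [Nonempty ι]
    (p b : ι → Finset (Fin T) → ℝ)
    (hp0 : ∀ i, p i ∅ = 0) (hb0 : ∀ i, b i ∅ = 0)
    (hsuper : ∀ i, ∀ X Y : Finset (Fin T), p i X + p i Y ≤ p i (X ∪ Y) + p i (X ∩ Y))
    (hsub : ∀ i, ∀ X Y : Finset (Fin T), b i X + b i Y ≥ b i (X ∪ Y) + b i (X ∩ Y))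
    (hcross : ∀ i, ∀ X Y : Finset (Fin T), b i X - p i Y ≥ b i (X \ Y) - p i (Y \ X)) :
    {u : Fin T → ℝ | ∃ f : ι → Fin T → ℝ,
        (∀ i, f i ∈ {v : Fin T → ℝ | ∀ A : Finset (Fin T),
          p i A ≤ ∑ t ∈ A, v t ∧ ∑ t ∈ A, v t ≤ b i A}) ∧ u = ∑ i, f i} =
    {u : Fin T → ℝ | ∀ A : Finset (Fin T),
        ∑ i, p i A ≤ ∑ t ∈ A, u t ∧ ∑ t ∈ A, u t ≤ ∑ i, b i A} :=
  minkowski_sum_gPolymatroids_general T ι p b hp0 hb0 hsuper hsub hcross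
end

section
/- Let T be a positive integer and let I be a nonempty finite index set. For each i ∈ I, let C_i ⊆ Fin T, m_i > 0, and 0 ≤ e_lo_i ≤ e_hi_i ≤ m_i·|C_i|, and define the individual flexibility set F_i := {u : Fin T → ℝ | u t = 0 for t ∉ C_i, 0 ≤ u t ≤ m_i for t ∈ C_i, e_lo_i ≤ ∑_t u t ≤ e_hi_i}, and set functions p_i(A) = max(0, e_lo_i − m_i·(|C_i| − |A ∩ C_i|)) and b_i(A) = min(e_hi_i, m_i·|A ∩ C_i|). Then the Minkowski sum ∑_{i ∈ I} F_i equals {u : Fin T → ℝ | ∑_{i ∈ I} p_i(A) ≤ ∑_{t ∈ A} u t ≤ ∑_{i ∈ I} b_i(A) for all A ⊆ Fin T}. -/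
/-!
For `⊆`, every individual profile satisfies `p_i(A) ≤ u_i(A) ≤ b_i(A)`; sum over `i`.

For `⊇`, the aggregate set is a Minkowski sum of polytopes, hence compact and convex, so a
point `u` outside it is strictly separated from it by a linear functional `⟨c, ·⟩`. Let each EV
charge greedily in order of decreasing `c`, with total energy
`e_i = max(e_lo_i, min(e_hi_i, m_i |{c > 0} ∩ C_i|))`. The aggregate profile `v` of these
greedy profiles attains `∑ b_i` on every upper level set `{c ≥ θ}`, `θ > 0`, and `∑ p_i` on
every lower level set `{c ≤ θ}`, `θ < 0`. By the layer-cake formula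
`⟨c, x⟩ = ∫₀^∞ x({c ≥ θ}) dθ - ∫₀^∞ x({c ≤ -θ}) dθ`, the constraints on `u` give
`⟨c, u⟩ ≤ ⟨c, v⟩`, contradicting the separation.
-/

open Finset MeasureTheory

namespace EVFlexibility

section LayerCake

variable {α : Type*} [Fintype α]

theorem sum_posPart_mul_eq_setIntegral (c x : α → ℝ) {M : ℝ} (hM : ∀ t, c t ≤ M) :
    ∑ t, (c t)⁺ * x t = ∫ θ in Set.Ioc 0 M, ∑ t ∈ {t | θ ≤ c t}, x t := by
  have hlevel (θ : ℝ) :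
      ∑ t ∈ {t | θ ≤ c t}, x t = ∑ t, (Set.Iic (c t)).indicator (fun _ => x t) θ := by
    simp only [sum_filter, Set.indicator_apply, Set.mem_Iic]
  have hind (t : α) :
      ∫ θ in Set.Ioc 0 M, (Set.Iic (c t)).indicator (fun _ => x t) θ = (c t)⁺ * x t := by
    rw [setIntegral_indicator measurableSet_Iic, setIntegral_const, smul_eq_mul,
      Set.Ioc_inter_Iic, min_eq_right (hM t), Real.volume_real_Ioc, sub_zero]
    rfl
  simp_rw [hlevel]
  rw [integral_finsetSum]
  · exact sum_congr rfl fun t _ => (hind t).symm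
  · exact fun t _ => (integrableOn_const measure_Ioc_lt_top.ne).indicator measurableSet_Iic

theorem sum_posPart_mul_nonpos (c x : α → ℝ) (h : ∀ θ > 0, ∑ t ∈ {t | θ ≤ c t}, x t ≤ 0) :
    ∑ t, (c t)⁺ * x t ≤ 0 := by
  rw [sum_posPart_mul_eq_setIntegral c x fun t =>
    (le_abs_self _).trans (single_le_sum (fun s _ => abs_nonneg (c s)) (mem_univ t))]
  exact setIntegral_nonpos measurableSet_Ioc fun θ hθ => h θ hθ.1

theorem sum_mul_le_sum_mul_of_levelSets (c u v : α → ℝ)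
    (hupper : ∀ θ > 0, ∑ t ∈ {t | θ ≤ c t}, u t ≤ ∑ t ∈ {t | θ ≤ c t}, v t)
    (hlower : ∀ θ < 0, ∑ t ∈ {t | c t ≤ θ}, v t ≤ ∑ t ∈ {t | c t ≤ θ}, u t) :
    ∑ t, c t * u t ≤ ∑ t, c t * v t := by
  have hpos := sum_posPart_mul_nonpos c (u - v) fun θ hθ => by
    simpa [sum_sub_distrib] using hupper θ hθ
  have hneg := sum_posPart_mul_nonpos (fun t => -c t) (v - u) fun θ hθ => by
    have hset : (univ.filter fun t => θ ≤ -c t) = univ.filter fun t => c t ≤ -θ :=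
      filter_congr fun t _ => le_neg
    rw [hset, Pi.sub_def, sum_sub_distrib]
    linarith [hlower (-θ) (neg_lt_zero.mpr hθ)]
  have hsplit : ∑ t, c t * u t - ∑ t, c t * v t =
      ∑ t, (c t)⁺ * (u - v) t + ∑ t, (-c t)⁺ * (v - u) t := by
    rw [← sum_sub_distrib, ← sum_add_distrib]
    refine sum_congr rfl fun t _ => ?_
    rw [posPart_neg, Pi.sub_apply, Pi.sub_apply]
    linear_combination (v t - u t) * posPart_sub_negPart (c t)
  linarith

end LayerCake

section Greedy

variable {α β : Type*} [DecidableEq α] [LinearOrder β]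

theorem exists_sum_eq_on_upperSets (c : α → β) (C : Finset α) {m : ℝ} (g : Finset α → ℝ)
    (hg_empty : g ∅ = 0)
    (hg_mono : ∀ A t, t ∉ A → g A ≤ g (insert t A))
    (hg_step : ∀ A t, t ∉ A → g (insert t A) ≤ g A + m)
    (hg_notMem : ∀ A, ∀ t ∉ C, g (insert t A) = g A) (U : Finset α) :
    ∃ f : α → ℝ, (∀ t ∉ U, f t = 0) ∧ (∀ t ∉ C, f t = 0) ∧ (∀ t, 0 ≤ f t ∧ f t ≤ m) ∧
      ∀ A ⊆ U, (∀ x ∈ A, ∀ y ∈ U, c x ≤ c y → y ∈ A) → ∑ t ∈ A, f t = g A := by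
  induction U using Finset.induction_on_min_value c with
  | empty =>
    refine ⟨0, fun _ _ => rfl, fun _ _ => rfl, fun t => ⟨le_rfl, ?_⟩, fun A hA _ => ?_⟩
    · simpa using (hg_mono ∅ t (notMem_empty t)).trans (hg_step ∅ t (notMem_empty t))
    · rw [subset_empty.mp hA, sum_empty, hg_empty]
  | insert a U haU hmin ih =>
    obtain ⟨f, hfU, hfC, hfm, hfA⟩ := ih
    have hU : ∑ t ∈ U, f t = g U := hfA U subset_rfl fun _ _ y hy _ => hy
    refine ⟨Function.update f a (g (insert a U) - g U), fun t ht => ?_, fun t ht => ?_,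
      fun t => ?_, fun A hAU hAup => ?_⟩
    · rw [mem_insert, not_or] at ht
      rw [Function.update_of_ne ht.1, hfU t ht.2]
    · rcases eq_or_ne t a with rfl | hta
      · rw [Function.update_self, hg_notMem U t ht, sub_self]
      · rw [Function.update_of_ne hta, hfC t ht]
    · rcases eq_or_ne t a with rfl | hta
      · rw [Function.update_self]
        constructor <;> linarith [hg_mono U t haU, hg_step U t haU]
      · rw [Function.update_of_ne hta]; exact hfm t
    · by_cases haA : a ∈ A
      · have hA : A = insert a U := subset_antisymm hAU fun t ht =>
          hAup a haA t ht (by rcases mem_insert.mp ht with rfl | ht; exacts [le_rfl, hmin t ht])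
        rw [hA, sum_insert haU, Function.update_self, sum_update_of_notMem haU, hU]
        ring
      · have hAU' : A ⊆ U := fun t ht =>
          (mem_insert.mp (hAU ht)).resolve_left (ne_of_mem_of_not_mem ht haA)
        rw [← hfA A hAU' fun x hx y hy => hAup x hx y (mem_insert_of_mem hy)]
        exact sum_congr rfl fun t ht => Function.update_of_ne (ne_of_mem_of_not_mem ht haA) _ _

end Greedy

section FlexSet

variable {α : Type*} [Fintype α] [DecidableEq α]

def flexSet (C : Finset α) (m l s : ℝ) : Set (α → ℝ) :=
  {u | (∀ t ∉ C, u t = 0) ∧ (∀ t ∈ C, 0 ≤ u t ∧ u t ≤ m) ∧ l ≤ ∑ t, u t ∧ ∑ t, u t ≤ s}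

def flexLower (C : Finset α) (m l : ℝ) (A : Finset α) : ℝ :=
  max 0 (l - m * ((C.card : ℝ) - ((A ∩ C).card : ℝ)))

def flexUpper (C : Finset α) (m s : ℝ) (A : Finset α) : ℝ :=
  min s (m * ((A ∩ C).card : ℝ))

variable {C : Finset α} {m l s : ℝ}

theorem flexSet_eq_pi_inter_preimage (C : Finset α) (m l s : ℝ) :
    flexSet C m l s = Set.univ.pi (fun t => Set.Icc 0 (if t ∈ C then m else 0)) ∩
      (fun u => ∑ t, u t) ⁻¹' Set.Icc l s := by
  ext u
  simp only [flexSet, Set.mem_ofPred_eq, Set.mem_inter_iff, Set.mem_univ_pi, Set.mem_preimage,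
    Set.mem_Icc]
  refine and_assoc.symm.trans (and_congr_left' ⟨fun ⟨h0, hC⟩ t => ?_,
    fun h => ⟨fun t ht => ?_, fun t ht => ?_⟩⟩)
  · split_ifs with ht
    exacts [hC t ht, (h0 t ht).symm ▸ ⟨le_rfl, le_rfl⟩]
  · have := h t; rw [if_neg ht] at this; exact le_antisymm this.2 this.1
  · have := h t; rwa [if_pos ht] at this

theorem convex_flexSet (C : Finset α) (m l s : ℝ) : Convex ℝ (flexSet C m l s) := by
  rw [flexSet_eq_pi_inter_preimage]
  refine (convex_pi fun t _ => convex_Icc _ _).inter ((convex_Icc l s).is_linear_preimage ?_)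
  exact ⟨fun u v => by simp only [Pi.add_apply, sum_add_distrib],
    fun a u => by simp only [Pi.smul_apply, smul_eq_mul, mul_sum]⟩

theorem isCompact_flexSet (C : Finset α) (m l s : ℝ) : IsCompact (flexSet C m l s) := by
  rw [flexSet_eq_pi_inter_preimage]
  exact (isCompact_univ_pi fun t => isCompact_Icc).inter_right
    (isClosed_Icc.preimage (continuous_finsetSum _ fun t _ => continuous_apply t))

theorem nonneg_of_mem_flexSet {f : α → ℝ} (hf : f ∈ flexSet C m l s) (t : α) : 0 ≤ f t := by
  by_cases ht : t ∈ C
  exacts [(hf.2.1 t ht).1, (hf.1 t ht).ge]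

theorem sum_le_mul_card_inter {f : α → ℝ} (hf : f ∈ flexSet C m l s) (A : Finset α) :
    ∑ t ∈ A, f t ≤ m * (A ∩ C).card := by
  rw [← sum_subset inter_subset_left fun t _ ht => hf.1 t fun htC => ht (mem_inter.2 ⟨‹_›, htC⟩)]
  calc ∑ t ∈ A ∩ C, f t ≤ ∑ _t ∈ A ∩ C, m :=
        sum_le_sum fun t ht => (hf.2.1 t (mem_inter.1 ht).2).2
    _ = m * (A ∩ C).card := by rw [sum_const, nsmul_eq_mul, mul_comm]

theorem card_compl_inter (A C : Finset α) :
    ((Aᶜ ∩ C).card : ℝ) = C.card - (A ∩ C).card := by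
  rw [eq_sub_iff_add_eq, ← Nat.cast_add, ← card_union_of_disjoint, ← union_inter_distrib_right,
    union_comm, union_compl, univ_inter]
  exact disjoint_compl_left.mono inter_subset_left inter_subset_left

theorem flexLower_eq (C : Finset α) (m l : ℝ) (A : Finset α) :
    flexLower C m l A = max 0 (l - m * (Aᶜ ∩ C).card) := by
  rw [flexLower, card_compl_inter]

theorem flexLower_le_sum {f : α → ℝ} (hf : f ∈ flexSet C m l s) (A : Finset α) :
    flexLower C m l A ≤ ∑ t ∈ A, f t := by
  rw [flexLower_eq]
  refine max_le (sum_nonneg fun t _ => nonneg_of_mem_flexSet hf t) ?_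
  linarith [sum_add_sum_compl A f, hf.2.2.1, sum_le_mul_card_inter hf Aᶜ]

theorem sum_le_flexUpper {f : α → ℝ} (hf : f ∈ flexSet C m l s) (A : Finset α) :
    ∑ t ∈ A, f t ≤ flexUpper C m s A :=
  le_min ((sum_le_sum_of_subset_of_nonneg (subset_univ A) fun t _ _ =>
    nonneg_of_mem_flexSet hf t).trans hf.2.2.2) (sum_le_mul_card_inter hf A)

theorem exists_mem_flexSet_sum_eq_min {β : Type*} [LinearOrder β] (c : α → β) {e : ℝ}
    (hm : 0 ≤ m) (he : 0 ≤ e) (hle : l ≤ e) (hes : e ≤ s) (heC : e ≤ m * C.card) :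
    ∃ f ∈ flexSet C m l s, ∀ A : Finset α, (∀ x ∈ A, ∀ y, c x ≤ c y → y ∈ A) →
      ∑ t ∈ A, f t = min e (m * (A ∩ C).card) := by
  set g : Finset α → ℝ := fun A => min e (m * (A ∩ C).card)
  have hcard_mono (A : Finset α) (t : α) : ((A ∩ C).card : ℝ) ≤ (insert t A ∩ C).card := by
    exact_mod_cast card_le_card (inter_subset_inter_right (subset_insert t A))
  have hcard_step (A : Finset α) (t : α) : ((insert t A ∩ C).card : ℝ) ≤ (A ∩ C).card + 1 := by
    have : insert t A ∩ C ⊆ insert t (A ∩ C) := fun x hx => by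
      simp only [mem_inter, mem_insert] at hx ⊢; tauto
    exact_mod_cast (card_le_card this).trans (card_insert_le t _)
  obtain ⟨f, -, hfC, hfm, hfA⟩ := exists_sum_eq_on_upperSets c C (m := m) g (by simp [g, he])
    (fun A t _ => min_le_min_left e (mul_le_mul_of_nonneg_left (hcard_mono A t) hm))
    (fun A t _ => by
      have := mul_le_mul_of_nonneg_left (hcard_step A t) hm
      simp only [g, min_def]; split_ifs <;> linarith)
    (fun A t ht => by simp only [g, insert_inter_of_notMem ht]) univ
  have htotal : ∑ t, f t = e := by
    rw [hfA univ subset_rfl fun _ _ y hy _ => hy]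
    simp only [g, univ_inter, min_eq_left heC]
  exact ⟨f, ⟨hfC, fun t _ => hfm t, htotal ▸ hle, htotal ▸ hes⟩,
    fun A hA => hfA A (subset_univ A) fun x hx y _ => hA x hx y⟩

theorem exists_mem_flexSet_tight_on_levelSets (c : α → ℝ) (hm : 0 ≤ m) (hl : 0 ≤ l)
    (hls : l ≤ s) (hs : s ≤ m * C.card) :
    ∃ f ∈ flexSet C m l s,
      (∀ θ > 0, ∑ t ∈ {t | θ ≤ c t}, f t = flexUpper C m s {t | θ ≤ c t}) ∧
      (∀ θ < 0, ∑ t ∈ {t | c t ≤ θ}, f t = flexLower C m l {t | c t ≤ θ}) := by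
  have hmono {A B : Finset α} (h : A ⊆ B) : m * (A ∩ C).card ≤ m * (B ∩ C).card :=
    mul_le_mul_of_nonneg_left (by exact_mod_cast card_le_card (inter_subset_inter_right h)) hm
  set K := m * (({t | 0 < c t} : Finset α) ∩ C).card
  set e := max l (min s K)
  have hes : e ≤ s := max_le hls (min_le_left _ _)
  obtain ⟨f, hf, hfA⟩ := exists_mem_flexSet_sum_eq_min c hm
    (hl.trans (le_max_left _ _)) (le_max_left _ _) hes (hes.trans hs)
  refine ⟨f, hf, fun θ hθ => ?_, fun θ hθ => ?_⟩
  · have hK : m * (({t | θ ≤ c t} : Finset α) ∩ C).card ≤ K :=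
      hmono fun t ht => by simp only [mem_filter, mem_univ, true_and] at ht ⊢; linarith
    rw [hfA _ fun x hx y hxy => by simp only [mem_filter, mem_univ, true_and] at hx ⊢; linarith,
      flexUpper]
    simp only [min_def, max_def]; split_ifs <;> linarith
  · have hcompl : ({t | c t ≤ θ} : Finset α) = ({t | θ < c t} : Finset α)ᶜ := by
      ext t; simp
    have hK : K ≤ m * (({t | θ < c t} : Finset α) ∩ C).card :=
      hmono fun t ht => by simp only [mem_filter, mem_univ, true_and] at ht ⊢; linarith
    have hupper := hfA {t | θ < c t} fun x hx y hxy => by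
      simp only [mem_filter, mem_univ, true_and] at hx ⊢; linarith
    have htotal := hfA univ fun _ _ y _ => mem_univ y
    rw [univ_inter, min_eq_left (hes.trans hs)] at htotal
    rw [hcompl, flexLower_eq, compl_compl]
    have := sum_add_sum_compl ({t | θ < c t} : Finset α) f
    simp only [e, min_def, max_def] at hupper htotal ⊢
    split_ifs at hupper htotal ⊢ <;> linarith

end FlexSet

section MinkowskiSum

open scoped Pointwise

variable {ι E : Type*} [Fintype ι] [AddCommMonoid E]

theorem setOf_exists_sum_eq_sum (F : ι → Set E) :
    {u | ∃ f : ι → E, (∀ i, f i ∈ F i) ∧ u = ∑ i, f i} = ∑ i, F i := by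
  ext u
  rw [Set.mem_fintype_sum]
  simp [eq_comm]

theorem sum_sum_apply_comm {α : Type*} (f : ι → α → E) (A : Finset α) :
    ∑ t ∈ A, (∑ i, f i) t = ∑ i, ∑ t ∈ A, f i t := by
  simp only [Finset.sum_apply]
  exact sum_comm

theorem isCompact_sum [TopologicalSpace E] [ContinuousAdd E] {F : ι → Set E}
    (hF : ∀ i, IsCompact (F i)) : IsCompact (∑ i, F i) :=
  Finset.sum_induction _ IsCompact (fun _ _ => IsCompact.add) isCompact_singleton fun i _ => hF i

end MinkowskiSum

end EVFlexibility

open EVFlexibility in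
theorem aggregate_flexibility_eq_gPolymatroid_general
    (T : ℕ) (ι : Type*) [Fintype ι]
    (C : ι → Finset (Fin T)) (m : ι → ℝ) (hm : ∀ i, 0 < m i)
    (e_lo e_hi : ι → ℝ) (he0 : ∀ i, 0 ≤ e_lo i) (hee : ∀ i, e_lo i ≤ e_hi i)
    (he2 : ∀ i, e_hi i ≤ m i * ((C i).card : ℝ))
    (F : ι → Set (Fin T → ℝ))
    (hF : ∀ i, F i = {u : Fin T → ℝ |
        (∀ t ∉ C i, u t = 0) ∧ (∀ t ∈ C i, 0 ≤ u t ∧ u t ≤ m i) ∧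
        e_lo i ≤ ∑ t, u t ∧ ∑ t, u t ≤ e_hi i})
    (p b : ι → Finset (Fin T) → ℝ)
    (hp : ∀ i A, p i A = max 0 (e_lo i - m i * (((C i).card : ℝ) - ((A ∩ C i).card : ℝ))))
    (hb : ∀ i A, b i A = min (e_hi i) (m i * ((A ∩ C i).card : ℝ))) :
    {u : Fin T → ℝ | ∃ f : ι → Fin T → ℝ, (∀ i, f i ∈ F i) ∧ u = ∑ i, f i} =
    {u : Fin T → ℝ | ∀ A : Finset (Fin T),
        ∑ i, p i A ≤ ∑ t ∈ A, u t ∧ ∑ t ∈ A, u t ≤ ∑ i, b i A} := by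
  obtain rfl : F = fun i => flexSet (C i) (m i) (e_lo i) (e_hi i) := funext hF
  obtain rfl : p = fun i => flexLower (C i) (m i) (e_lo i) := funext₂ hp
  obtain rfl : b = fun i => flexUpper (C i) (m i) (e_hi i) := funext₂ hb
  rw [setOf_exists_sum_eq_sum]
  ext u
  refine ⟨fun hu A => ?_, fun hu => ?_⟩
  · obtain ⟨f, hf, rfl⟩ := (Set.mem_fintype_sum _ _).1 hu
    rw [sum_sum_apply_comm]
    exact ⟨sum_le_sum fun i _ => flexLower_le_sum (hf i) A,
      sum_le_sum fun i _ => sum_le_flexUpper (hf i) A⟩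
  by_contra hu'
  obtain ⟨φ, r, hφS, hφu⟩ := geometric_hahn_banach_closed_point
    (convex_sum _ fun i _ => convex_flexSet _ _ _ _)
    (isCompact_sum fun i => isCompact_flexSet _ _ _ _).isClosed hu'
  set c : Fin T → ℝ := fun t => φ fun s => if t = s then 1 else 0
  have hφ (x : Fin T → ℝ) : φ x = ∑ t, c t * x t := by
    rw [← ContinuousLinearMap.coe_coe, LinearMap.pi_apply_eq_sum_univ]
    exact sum_congr rfl fun t _ => mul_comm _ _
  choose f hf hupper hlower using fun i =>
    exists_mem_flexSet_tight_on_levelSets c (hm i).le (he0 i) (hee i) (he2 i)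
  have hle : φ u ≤ φ (∑ i, f i) := by
    rw [hφ, hφ]
    refine sum_mul_le_sum_mul_of_levelSets c u _ (fun θ hθ => ?_) (fun θ hθ => ?_)
    · rw [sum_sum_apply_comm, sum_congr rfl fun i _ => hupper i θ hθ]; exact (hu _).2
    · rw [sum_sum_apply_comm, sum_congr rfl fun i _ => hlower i θ hθ]; exact (hu _).1
  exact (hφS _ ((Set.mem_fintype_sum _ _).2 ⟨f, hf, rfl⟩)).not_ge (hφu.le.trans hle)

/-- The aggregate flexibility set (Minkowski sum of the individual
flexibility sets of a population of EVs) equals the generalized polymatroid generated by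
the sums of the individual set functions. -/
theorem aggregate_flexibility_eq_gPolymatroid
    (T : ℕ) (hT : 0 < T) (ι : Type*) [Fintype ι] [Nonempty ι]
    (C : ι → Finset (Fin T)) (m : ι → ℝ) (hm : ∀ i, 0 < m i)
    (e_lo e_hi : ι → ℝ) (he0 : ∀ i, 0 ≤ e_lo i) (hee : ∀ i, e_lo i ≤ e_hi i)
    (he2 : ∀ i, e_hi i ≤ m i * ((C i).card : ℝ))
    (F : ι → Set (Fin T → ℝ))
    (hF : ∀ i, F i = {u : Fin T → ℝ |
        (∀ t ∉ C i, u t = 0) ∧ (∀ t ∈ C i, 0 ≤ u t ∧ u t ≤ m i) ∧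
        e_lo i ≤ ∑ t, u t ∧ ∑ t, u t ≤ e_hi i})
    (p b : ι → Finset (Fin T) → ℝ)
    (hp : ∀ i A, p i A = max 0 (e_lo i - m i * (((C i).card : ℝ) - ((A ∩ C i).card : ℝ))))
    (hb : ∀ i A, b i A = min (e_hi i) (m i * ((A ∩ C i).card : ℝ))) :
    {u : Fin T → ℝ | ∃ f : ι → Fin T → ℝ, (∀ i, f i ∈ F i) ∧ u = ∑ i, f i} =
    {u : Fin T → ℝ | ∀ A : Finset (Fin T),
        ∑ i, p i A ≤ ∑ t ∈ A, u t ∧ ∑ t ∈ A, u t ≤ ∑ i, b i A} :=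
  aggregate_flexibility_eq_gPolymatroid_general T ι C m hm e_lo e_hi he0 hee he2 F hF p b hp hb
end

section
/- Let T be a positive integer, p : Finset (Fin T) → ℝ a supermodular set function, and a_lo, a_hi : Fin T → ℝ with a_lo ≤ a_hi pointwise. Then the set function p' defined by p'(A) := max over X ⊆ Fin T of (p(X) − ∑_{t ∈ X \ A} a_lo t + ∑_{t ∈ A \ X} a_hi t) is supermodular: p'(X) + p'(Y) ≤ p'(X ∪ Y) + p'(X ∩ Y) for all X, Y ⊆ Fin T. -/
/-! The objective `p X + a_hi(A \ X) - a_lo(X \ A)` does not decrease when the pairs `(A, X)`,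
`(B, Y)` are replaced by `(A ∪ B, X ∩ Y)` and `(A ∩ B, X ∪ Y)`: for `p` this is supermodularity,
for the box terms it holds element by element because `a_lo ≤ a_hi`. Applying this to maximisers
`X` for `A` and `Y` for `B` bounds `p' A + p' B` by `p' (A ∪ B) + p' (A ∩ B)`. -/

open Finset

theorem sup'_univ_add_sup'_univ_le {L β : Type*} [Lattice L] [Lattice β] [Fintype β]
    [Nonempty β] (F : L → β → ℝ)
    (hF : ∀ A B X Y, F A X + F B Y ≤ F (A ⊔ B) (X ⊓ Y) + F (A ⊓ B) (X ⊔ Y)) (A B : L) :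
    univ.sup' univ_nonempty (F A) + univ.sup' univ_nonempty (F B) ≤
      univ.sup' univ_nonempty (F (A ⊔ B)) + univ.sup' univ_nonempty (F (A ⊓ B)) := by
  obtain ⟨X, -, hX⟩ := exists_mem_eq_sup' univ_nonempty (F A)
  obtain ⟨Y, -, hY⟩ := exists_mem_eq_sup' univ_nonempty (F B)
  calc univ.sup' univ_nonempty (F A) + univ.sup' univ_nonempty (F B)
      = F A X + F B Y := by rw [hX, hY]
    _ ≤ F (A ⊔ B) (X ⊓ Y) + F (A ⊓ B) (X ⊔ Y) := hF A B X Y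
    _ ≤ univ.sup' univ_nonempty (F (A ⊔ B)) + univ.sup' univ_nonempty (F (A ⊓ B)) :=
      add_le_add (le_sup' _ (mem_univ _)) (le_sup' _ (mem_univ _))

section BoxCorrection

variable {α : Type*} [Fintype α] [DecidableEq α]

def boxCorrection (lo hi : α → ℝ) (A X : Finset α) : ℝ :=
  ∑ t ∈ A \ X, hi t - ∑ t ∈ X \ A, lo t

theorem boxCorrection_eq_sum (lo hi : α → ℝ) (A X : Finset α) :
    boxCorrection lo hi A X =
      ∑ t, ((if t ∈ A \ X then hi t else 0) - if t ∈ X \ A then lo t else 0) := by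
  rw [boxCorrection, sum_sub_distrib, sum_ite_mem, sum_ite_mem, univ_inter, univ_inter]

theorem boxCorrection_exchange {lo hi : α → ℝ} (h : ∀ t, lo t ≤ hi t) (A B X Y : Finset α) :
    boxCorrection lo hi A X + boxCorrection lo hi B Y ≤
      boxCorrection lo hi (A ∪ B) (X ∩ Y) + boxCorrection lo hi (A ∩ B) (X ∪ Y) := by
  simp only [boxCorrection_eq_sum, ← sum_add_distrib]
  refine sum_le_sum fun t _ => ?_
  by_cases hX : t ∈ X <;> by_cases hY : t ∈ Y <;> by_cases hA : t ∈ A <;>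
    by_cases hB : t ∈ B <;> simp [hX, hY, hA, hB] <;> linarith [h t]

end BoxCorrection

theorem truncated_lower_supermodular_general
    (T : ℕ)
    (p : Finset (Fin T) → ℝ)
    (hsuper : ∀ X Y : Finset (Fin T), p X + p Y ≤ p (X ∪ Y) + p (X ∩ Y))
    (a_lo a_hi : Fin T → ℝ) (ha : ∀ t, a_lo t ≤ a_hi t)
    (p' : Finset (Fin T) → ℝ)
    (hp' : ∀ A, p' A = Finset.univ.sup' Finset.univ_nonempty
        (fun X : Finset (Fin T) => p X - ∑ t ∈ X \ A, a_lo t + ∑ t ∈ A \ X, a_hi t)) :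
    ∀ X Y : Finset (Fin T), p' X + p' Y ≤ p' (X ∪ Y) + p' (X ∩ Y) := by
  intro A B
  simp only [hp']
  refine sup'_univ_add_sup'_univ_le
    (fun A X : Finset (Fin T) => p X - ∑ t ∈ X \ A, a_lo t + ∑ t ∈ A \ X, a_hi t)
    (fun C D X Y => ?_) A B
  have hbox := boxCorrection_exchange ha C D X Y
  simp only [boxCorrection] at hbox
  simp only [sup_eq_union, inf_eq_inter]
  linarith [hsuper X Y]

/-- The truncated lower set function
`p'(A) = max_{X ⊆ Fin T} (p(X) − a_lo(X \ A) + a_hi(A \ X))` is supermodular whenever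
`p` is supermodular. -/
theorem truncated_lower_supermodular
    (T : ℕ) (hT : 0 < T)
    (p : Finset (Fin T) → ℝ)
    (hsuper : ∀ X Y : Finset (Fin T), p X + p Y ≤ p (X ∪ Y) + p (X ∩ Y))
    (a_lo a_hi : Fin T → ℝ) (ha : ∀ t, a_lo t ≤ a_hi t)
    (p' : Finset (Fin T) → ℝ)
    (hp' : ∀ A, p' A = Finset.univ.sup' Finset.univ_nonempty
        (fun X : Finset (Fin T) => p X - ∑ t ∈ X \ A, a_lo t + ∑ t ∈ A \ X, a_hi t)) :
    ∀ X Y : Finset (Fin T), p' X + p' Y ≤ p' (X ∪ Y) + p' (X ∩ Y) :=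
  truncated_lower_supermodular_general T p hsuper a_lo a_hi ha p' hp'
end

section
/- Let T be a positive integer, b : Finset (Fin T) → ℝ a submodular set function, and a_lo, a_hi : Fin T → ℝ with a_lo ≤ a_hi pointwise. Then the set function b' defined by b'(A) := min over X ⊆ Fin T of (b(X) − ∑_{t ∈ X \ A} a_hi t + ∑_{t ∈ A \ X} a_lo t) is submodular: b'(X) + b'(Y) ≥ b'(X ∪ Y) + b'(X ∩ Y) for all X, Y ⊆ Fin T. -/
/-!
`b'` is the partial minimum over `X` of `(X, A) ↦ b X - a_hi (X \ A) + a_lo (A \ X)`, and this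
function is submodular on the product lattice with `X` ordered by reverse inclusion: `b`
contributes its own submodularity and the box terms are checked elementwise. Partial minimisation
preserves submodularity, because the minimisers for `A` and `B` combine into admissible
candidates for `A ∪ B` and `A ∩ B`.
-/

open Finset

theorem inf'_univ_submodular_of_exchange {β γ R : Type*} [Fintype β] [Nonempty β] [Lattice β]
    [Lattice γ] [AddCommMonoid R] [LinearOrder R] [IsOrderedAddMonoid R] (f : β → γ → R)
    (hf : ∀ U V A B, f (U ⊓ V) (A ⊔ B) + f (U ⊔ V) (A ⊓ B) ≤ f U A + f V B) (A B : γ) :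
    univ.inf' univ_nonempty (f · (A ⊔ B)) + univ.inf' univ_nonempty (f · (A ⊓ B)) ≤
      univ.inf' univ_nonempty (f · A) + univ.inf' univ_nonempty (f · B) := by
  obtain ⟨U, -, hU⟩ := exists_mem_eq_inf' univ_nonempty (f · A)
  obtain ⟨V, -, hV⟩ := exists_mem_eq_inf' univ_nonempty (f · B)
  calc univ.inf' univ_nonempty (f · (A ⊔ B)) + univ.inf' univ_nonempty (f · (A ⊓ B))
      ≤ f (U ⊓ V) (A ⊔ B) + f (U ⊔ V) (A ⊓ B) :=
        add_le_add (inf'_le _ (mem_univ _)) (inf'_le _ (mem_univ _))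
    _ ≤ f U A + f V B := hf U V A B
    _ = _ := by rw [hU, hV]

section BoxCorrection

variable {α : Type*} [Fintype α] [DecidableEq α]

theorem sum_sdiff_eq_sum_univ_ite {M : Type*} [AddCommMonoid M] (S C : Finset α) (f : α → M) :
    ∑ t ∈ S \ C, f t = ∑ t, if t ∈ S \ C then f t else 0 := by
  rw [sum_ite_mem, univ_inter]

/-- Elementwise the two sides agree except for `t ∈ (U \ V) ∩ (A \ B)` or `t ∈ (V \ U) ∩ (B \ A)`,
where the left side has the extra `lo t - hi t ≤ 0`. -/
theorem box_correction_exchange {lo hi : α → ℝ} (hlohi : ∀ t, lo t ≤ hi t)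
    (U V A B : Finset α) :
    (-∑ t ∈ (U ∩ V) \ (A ∪ B), hi t + ∑ t ∈ (A ∪ B) \ (U ∩ V), lo t)
      + (-∑ t ∈ (U ∪ V) \ (A ∩ B), hi t + ∑ t ∈ (A ∩ B) \ (U ∪ V), lo t)
      ≤ (-∑ t ∈ U \ A, hi t + ∑ t ∈ A \ U, lo t)
      + (-∑ t ∈ V \ B, hi t + ∑ t ∈ B \ V, lo t) := by
  simp only [sum_sdiff_eq_sum_univ_ite, ← sum_neg_distrib, ← sum_add_distrib]
  refine sum_le_sum fun t _ => ?_
  by_cases hU : t ∈ U <;> by_cases hV : t ∈ V <;> by_cases hA : t ∈ A <;> by_cases hB : t ∈ B <;>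
    simp [hU, hV, hA, hB] <;> linarith [hlohi t]

theorem truncated_cost_exchange {b : Finset α → ℝ}
    (hsub : ∀ X Y : Finset α, b X + b Y ≥ b (X ∪ Y) + b (X ∩ Y))
    {lo hi : α → ℝ} (hlohi : ∀ t, lo t ≤ hi t) (U V A B : Finset α) :
    (b (U ∩ V) - ∑ t ∈ (U ∩ V) \ (A ∪ B), hi t + ∑ t ∈ (A ∪ B) \ (U ∩ V), lo t)
      + (b (U ∪ V) - ∑ t ∈ (U ∪ V) \ (A ∩ B), hi t + ∑ t ∈ (A ∩ B) \ (U ∪ V), lo t)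
      ≤ (b U - ∑ t ∈ U \ A, hi t + ∑ t ∈ A \ U, lo t)
      + (b V - ∑ t ∈ V \ B, hi t + ∑ t ∈ B \ V, lo t) := by
  linarith [box_correction_exchange hlohi U V A B, hsub U V]

end BoxCorrection

theorem truncated_upper_submodular_general
    (T : ℕ)
    (b : Finset (Fin T) → ℝ)
    (hsub : ∀ X Y : Finset (Fin T), b X + b Y ≥ b (X ∪ Y) + b (X ∩ Y))
    (a_lo a_hi : Fin T → ℝ) (ha : ∀ t, a_lo t ≤ a_hi t)
    (b' : Finset (Fin T) → ℝ)
    (hb' : ∀ A, b' A = Finset.univ.inf' Finset.univ_nonempty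
        (fun X : Finset (Fin T) => b X - ∑ t ∈ X \ A, a_hi t + ∑ t ∈ A \ X, a_lo t)) :
    ∀ X Y : Finset (Fin T), b' X + b' Y ≥ b' (X ∪ Y) + b' (X ∩ Y) := by
  intro A B
  simp only [hb']
  exact inf'_univ_submodular_of_exchange
    (fun X A => b X - ∑ t ∈ X \ A, a_hi t + ∑ t ∈ A \ X, a_lo t)
    (truncated_cost_exchange hsub ha) A B

/-- The truncated upper set function
`b'(A) = min_{X ⊆ Fin T} (b(X) − a_hi(X \ A) + a_lo(A \ X))` is submodular whenever
`b` is submodular. -/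
theorem truncated_upper_submodular
    (T : ℕ) (hT : 0 < T)
    (b : Finset (Fin T) → ℝ)
    (hsub : ∀ X Y : Finset (Fin T), b X + b Y ≥ b (X ∪ Y) + b (X ∩ Y))
    (a_lo a_hi : Fin T → ℝ) (ha : ∀ t, a_lo t ≤ a_hi t)
    (b' : Finset (Fin T) → ℝ)
    (hb' : ∀ A, b' A = Finset.univ.inf' Finset.univ_nonempty
        (fun X : Finset (Fin T) => b X - ∑ t ∈ X \ A, a_hi t + ∑ t ∈ A \ X, a_lo t)) :
    ∀ X Y : Finset (Fin T), b' X + b' Y ≥ b' (X ∪ Y) + b' (X ∩ Y) :=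
  truncated_upper_submodular_general T b hsub a_lo a_hi ha b' hb'
end

section
/- Let T be a positive integer and let p, b : Finset (Fin T) → ℝ be set functions with p(∅) = b(∅) = 0 such that p is supermodular, b is submodular, and b(X) − p(Y) ≥ b(X \ Y) − p(Y \ X) for all X, Y ⊆ Fin T. Then Q(p, b) := {u : Fin T → ℝ | p(A) ≤ ∑_{t ∈ A} u t ≤ b(A) for all A ⊆ Fin T} is nonempty. -/
/-!
Order the ground set linearly and take Edmonds' greedy vector `u t = b(≤ t) - b(< t)`.
Submodularity of `b` gives `u(A) ≤ b(A)` for every `A` by peeling off the maximum of `A`, and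
`u` telescopes to `b` on lower sets, so `u(univ) = b(univ)`. The cross-inequality with
`X = univ`, `Y = A` then gives `p(A) ≤ b(univ) - b(univ \ A) ≤ u(univ) - u(univ \ A) = u(A)`.
-/

open Finset

section Greedy

variable {α : Type*} [LinearOrder α] [LocallyFiniteOrderBot α]

def greedyVector (b : Finset α → ℝ) (t : α) : ℝ := b (Iic t) - b (Iio t)

lemma Iio_union_insert_of_forall_lt {a : α} {s : Finset α} (hs : ∀ x ∈ s, x < a) :
    Iio a ∪ insert a s = Iic a := by
  ext x
  simp only [mem_union, mem_Iio, mem_insert, mem_Iic]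
  constructor
  · rintro (h | rfl | h)
    exacts [h.le, le_rfl, (hs x h).le]
  · intro h
    exact h.lt_or_eq.imp_right Or.inl

lemma Iio_inter_insert_of_forall_lt {a : α} {s : Finset α} (hs : ∀ x ∈ s, x < a) :
    Iio a ∩ insert a s = s := by
  ext x
  simp only [mem_inter, mem_Iio, mem_insert]
  constructor
  · rintro ⟨hx, rfl | h⟩
    exacts [absurd hx (lt_irrefl x), h]
  · exact fun h => ⟨hs x h, Or.inr h⟩

lemma Iio_eq_of_isLowerSet_insert {a : α} {s : Finset α} (hs : ∀ x ∈ s, x < a)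
    (hlow : IsLowerSet ((insert a s : Finset α) : Set α)) : Iio a = s := by
  ext x
  refine ⟨fun hx => ?_, fun hx => mem_Iio.2 (hs x hx)⟩
  have hxa : x < a := mem_Iio.1 hx
  have hx' : x ∈ insert a s := by exact_mod_cast hlow hxa.le (by simp)
  exact (mem_insert.1 hx').resolve_left hxa.ne

variable {b : Finset α → ℝ}

lemma greedyVector_le_sub_of_forall_lt
    (hsub : ∀ X Y : Finset α, b X + b Y ≥ b (X ∪ Y) + b (X ∩ Y))
    {a : α} {s : Finset α} (hs : ∀ x ∈ s, x < a) :
    greedyVector b a ≤ b (insert a s) - b s := by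
  have h := hsub (Iio a) (insert a s)
  rw [Iio_union_insert_of_forall_lt hs, Iio_inter_insert_of_forall_lt hs] at h
  unfold greedyVector
  linarith

lemma sum_greedyVector_le (hb0 : b ∅ = 0)
    (hsub : ∀ X Y : Finset α, b X + b Y ≥ b (X ∪ Y) + b (X ∩ Y)) (A : Finset α) :
    ∑ t ∈ A, greedyVector b t ≤ b A := by
  induction A using Finset.induction_on_max with
  | empty => simp [hb0]
  | insert a s hs ih =>
    have ha : a ∉ s := fun h => lt_irrefl a (hs a h)
    rw [sum_insert ha]
    linarith [greedyVector_le_sub_of_forall_lt hsub hs]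

lemma sum_greedyVector_of_isLowerSet (hb0 : b ∅ = 0) {A : Finset α}
    (hA : IsLowerSet (A : Set α)) : ∑ t ∈ A, greedyVector b t = b A := by
  induction A using Finset.induction_on_max with
  | empty => simp [hb0]
  | insert a s hs ih =>
    obtain rfl := Iio_eq_of_isLowerSet_insert hs hA
    rw [sum_insert notMem_Iio_self, ih (by simpa using isLowerSet_Iio a), greedyVector,
      Iio_insert]
    ring

lemma sum_univ_greedyVector [Fintype α] (hb0 : b ∅ = 0) :
    ∑ t, greedyVector b t = b univ :=
  sum_greedyVector_of_isLowerSet hb0 (by simpa using isLowerSet_univ)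

end Greedy

lemma le_sum_of_cross {ι : Type*} [Fintype ι] [DecidableEq ι] {p b : Finset ι → ℝ}
    (hp0 : p ∅ = 0) (hcross : ∀ X Y : Finset ι, b X - p Y ≥ b (X \ Y) - p (Y \ X))
    {u : ι → ℝ} (hle : ∀ A, ∑ t ∈ A, u t ≤ b A) (huniv : ∑ t, u t = b univ) (A : Finset ι) :
    p A ≤ ∑ t ∈ A, u t := by
  have hc := hcross univ A
  rw [sdiff_eq_empty_iff_subset.2 (subset_univ A), hp0] at hc
  have hsplit := sum_sdiff (subset_univ A) (f := u)
  linarith [hle (univ \ A)]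

theorem gPolymatroid_nonempty_general
    (T : ℕ)
    (p b : Finset (Fin T) → ℝ)
    (hp0 : p ∅ = 0) (hb0 : b ∅ = 0)
    (hsub : ∀ X Y : Finset (Fin T), b X + b Y ≥ b (X ∪ Y) + b (X ∩ Y))
    (hcross : ∀ X Y : Finset (Fin T), b X - p Y ≥ b (X \ Y) - p (Y \ X)) :
    {u : Fin T → ℝ | ∀ A : Finset (Fin T),
        p A ≤ ∑ t ∈ A, u t ∧ ∑ t ∈ A, u t ≤ b A}.Nonempty := by
  have hle := sum_greedyVector_le hb0 hsub
  exact ⟨greedyVector b, fun A =>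
    ⟨le_sum_of_cross hp0 hcross hle (sum_univ_greedyVector hb0) A, hle A⟩⟩

/-- A generalized polymatroid `Q(p, b)` generated by a supermodular `p`
and submodular `b` with `p(∅) = b(∅) = 0` satisfying the cross-inequality is nonempty. -/
theorem gPolymatroid_nonempty
    (T : ℕ) (hT : 0 < T)
    (p b : Finset (Fin T) → ℝ)
    (hp0 : p ∅ = 0) (hb0 : b ∅ = 0)
    (hsuper : ∀ X Y : Finset (Fin T), p X + p Y ≤ p (X ∪ Y) + p (X ∩ Y))
    (hsub : ∀ X Y : Finset (Fin T), b X + b Y ≥ b (X ∪ Y) + b (X ∩ Y))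
    (hcross : ∀ X Y : Finset (Fin T), b X - p Y ≥ b (X \ Y) - p (Y \ X)) :
    {u : Fin T → ℝ | ∀ A : Finset (Fin T),
        p A ≤ ∑ t ∈ A, u t ∧ ∑ t ∈ A, u t ≤ b A}.Nonempty :=
  gPolymatroid_nonempty_general T p b hp0 hb0 hsub hcross
end
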